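/- Under the extension setup (S a based scheme on Z with closed subset T̃, based morphism i: U → S with iπ: U → S//T̃ an isomorphism, and Condition (*): |t(ui)| = 1 for all u ∈ U and t ∈ T̃), suppose (y₁,y₂) ∈ u ∈ U and z₁ ∈ (y₁i)T̃. Then z₁(ui) ∩ (y₂i)T̃ = z₂T̃''_u for some z₂ ∈ (y₂i)T̃. Moreover, if z₁' ∈ z₁T̃'_u, then z₁'(ui) ∩ (y₂i)T̃ = z₁(ui) ∩ (y₂i)T̃. -/

import Mathlib

/-!
Common framework for association schemes, following the paper
"A new semidirect product for association schemes".
-/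

/-- The diagonal relation `1_X` on a set `X`. -/
def diagRel (X : Type) : Set (X × X) := {w | w.1 = w.2}

/-- The transpose `s*` of a relation. -/
def transp {X : Type} (s : Set (X × X)) : Set (X × X) := Prod.swap '' s

/-- The structure constant `a_{pqr}`: for `(x,y) ∈ r`, the number of `z` with
`(x,z) ∈ p` and `(z,y) ∈ q` (well-defined for elements of a scheme). -/
noncomputable def aC {X : Type} (p q r : Set (X × X)) : ℕ :=
  sSup {n | ∃ w ∈ r, n = Nat.card {z : X // (w.1, z) ∈ p ∧ (z, w.2) ∈ q}}

/-- `S` is an association scheme on `X`. -/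
def IsScheme {X : Type} (S : Set (Set (X × X))) : Prop :=
  (∀ s ∈ S, s.Nonempty) ∧
  (∀ w : X × X, ∃! s, s ∈ S ∧ w ∈ s) ∧
  diagRel X ∈ S ∧
  (∀ s ∈ S, transp s ∈ S) ∧
  (∀ p ∈ S, ∀ q ∈ S, ∀ r ∈ S, ∀ w ∈ r,
    Nat.card {z : X // (w.1, z) ∈ p ∧ (z, w.2) ∈ q} = aC p q r)

/-- Complex product of two relations relative to a scheme `S`:
`pq = {r ∈ S : a_{pqr} > 0}`. -/
noncomputable def cmulS {X : Type} (S : Set (Set (X × X))) (p q : Set (X × X)) :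
    Set (Set (X × X)) :=
  {r | r ∈ S ∧ 0 < aC p q r}

/-- Complex product of two subsets of a scheme. -/
noncomputable def setMulS {X : Type} (S : Set (Set (X × X)))
    (Pp Qq : Set (Set (X × X))) : Set (Set (X × X)) :=
  ⋃ p ∈ Pp, ⋃ q ∈ Qq, cmulS S p q

/-- `T` is a closed subset of the scheme `S` (i.e. `T ⊆ S` and `T*T ⊆ T`). -/
def IsClosedIn {X : Type} (S T : Set (Set (X × X))) : Prop :=
  T ⊆ S ∧ ∀ p ∈ T, ∀ q ∈ T, cmulS S (transp p) q ⊆ T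

/-- `T` is a normal subset of the scheme `S` (i.e. `pT = Tp` for all `p ∈ S`). -/
noncomputable def IsNormalIn {X : Type} (S T : Set (Set (X × X))) : Prop :=
  ∀ p ∈ S, setMulS S {p} T = setMulS S T {p}

/-- `xs = {y : (x,y) ∈ s}`. -/
def pimg {X : Type} (s : Set (X × X)) (x : X) : Set X := {y | (x, y) ∈ s}

/-- The coset `xT` of a (closed) subset `T` of a scheme. -/
def coset {X : Type} (T : Set (Set (X × X))) (x : X) : Set X :=
  {y | ∃ t ∈ T, (x, y) ∈ t}

/-- The set `X/T` of cosets. -/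
def cosets {X : Type} (T : Set (Set (X × X))) : Set (Set X) :=
  {C | ∃ x, C = coset T x}

/-- The quotient relation `s^T` on cosets. -/
def quotRel {X : Type} (T : Set (Set (X × X))) (s : Set (X × X)) :
    Set (Set X × Set X) :=
  {w | ∃ x₁ x₂, w = (coset T x₁, coset T x₂) ∧
    ∃ p ∈ s, p.1 ∈ coset T x₁ ∧ p.2 ∈ coset T x₂}

/-- The relations of the quotient scheme `S//T`. -/
def quotS {X : Type} (S T : Set (Set (X × X))) : Set (Set (Set X × Set X)) :=
  {r | ∃ s ∈ S, r = quotRel T s}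

/-- A presentation of a (based) scheme: a set of points inside an ambient type,
a set of relations, and a basepoint. -/
structure Pres (P : Type) where
  pts : Set P
  rels : Set (Set (P × P))
  base : P

/-- A scheme `S` on the whole of `X`, based at `x0`, as a presentation. -/
def fullPres {X : Type} (S : Set (Set (X × X))) (x0 : X) : Pres X :=
  ⟨Set.univ, S, x0⟩

/-- The quotient scheme `S//T` on `X/T`, based at `x0 T`, as a presentation. -/
def quotPres {X : Type} (S T : Set (Set (X × X))) (x0 : X) : Pres (Set X) :=
  ⟨cosets T, quotS S T, coset T x0⟩

/-- The subscheme of a scheme defined by the coset `xT` of a closed subset `T`,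
as a presentation. -/
def subPres {X : Type} (T : Set (Set (X × X))) (x : X) : Pres X :=
  ⟨coset T x, {r | ∃ t ∈ T, r = t ∩ (coset T x ×ˢ coset T x)}, x⟩

/-- `f` is a morphism of schemes between two presentations: it maps points to
points, and pairs lying in the same relation to pairs lying in the same relation. -/
def IsMorOn {P Q : Type} (A : Pres P) (B : Pres Q) (f : P → Q) : Prop :=
  Set.MapsTo f A.pts B.pts ∧
  ∀ s ∈ A.rels, ∀ w ∈ s, ∀ w' ∈ s,
    ∃ t ∈ B.rels, (f w.1, f w.2) ∈ t ∧ (f w'.1, f w'.2) ∈ t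

/-- The induced map on scheme elements sends `s` to `t` (i.e. `s φ_S = t`):
every pair of `s` is mapped into `t`. -/
def elemMapsTo {P Q : Type} (f : P → Q) (s : Set (P × P)) (t : Set (Q × Q)) : Prop :=
  ∀ w ∈ s, (f w.1, f w.2) ∈ t

/-- `f` is an isomorphism of schemes: a morphism which is bijective on points and
whose induced map on scheme elements is bijective. -/
def IsIsoOn {P Q : Type} (A : Pres P) (B : Pres Q) (f : P → Q) : Prop :=
  IsMorOn A B f ∧ Set.BijOn f A.pts B.pts ∧
  ∀ t ∈ B.rels, ∃! s, s ∈ A.rels ∧ elemMapsTo f s t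

/-- A based isomorphism of schemes. -/
def IsBasedIsoOn {P Q : Type} (A : Pres P) (B : Pres Q) (f : P → Q) : Prop :=
  IsIsoOn A B f ∧ f A.base = B.base

/-- A based association scheme on a finite based set. -/
structure BScheme : Type 1 where
  X : Type
  fin : Fintype X
  base : X
  S : Set (Set (X × X))
  isScheme : IsScheme S

/-- A morphism in the category 𝒞: a normal closed subset on each side together
with a based isomorphism between the corresponding quotient schemes. -/
structure HomC (A B : BScheme) where
  TN : Set (Set (A.X × A.X))
  UN : Set (Set (B.X × B.X))
  TN_cl : IsClosedIn A.S TN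
  TN_n : IsNormalIn A.S TN
  UN_cl : IsClosedIn B.S UN
  UN_n : IsNormalIn B.S UN
  f : Set A.X → Set B.X
  iso : IsBasedIsoOn (quotPres A.S TN A.base) (quotPres B.S UN B.base) f

/-- `t^{T_φ} φ̃ = u^{U_φ}`: the induced map on quotient scheme elements sends
the class of `t` to the class of `u`. -/
def elemRel {A B : BScheme} (φ : HomC A B) (t : Set (A.X × A.X))
    (u : Set (B.X × B.X)) : Prop :=
  elemMapsTo φ.f (quotRel φ.TN t) (quotRel φ.UN u)

/-- The normal closed subset `T_{φψ}` of the composite. -/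
def Tcomp {A B C : BScheme} (φ : HomC A B) (ψ : HomC B C) :
    Set (Set (A.X × A.X)) :=
  {t | t ∈ A.S ∧ ∃ u ∈ B.S, elemRel φ t u ∧ elemRel ψ u (diagRel C.X)}

/-- The normal closed subset `V_{φψ}` of the composite. -/
def Vcomp {A B C : BScheme} (φ : HomC A B) (ψ : HomC B C) :
    Set (Set (C.X × C.X)) :=
  {v | v ∈ C.S ∧ ∃ u ∈ B.S, elemRel φ (diagRel A.X) u ∧ elemRel ψ u v}

/-- `ρ` is a composite of `φ` and `ψ` in the category 𝒞. -/
def IsComposite {A B C : BScheme} (φ : HomC A B) (ψ : HomC B C) (ρ : HomC A C) : Prop :=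
  ρ.TN = Tcomp φ ψ ∧ ρ.UN = Vcomp φ ψ ∧
  ∀ (x : A.X) (y : B.X) (z : C.X),
    φ.f (coset φ.TN x) = coset φ.UN y →
    ψ.f (coset ψ.TN y) = coset ψ.UN z →
    ρ.f (coset (Tcomp φ ψ) x) = coset (Vcomp φ ψ) z

/-- The identity morphism of 𝒞 at `A`: both normal closed subsets are `{1_X}`
and the isomorphism is the identity of `A//{1_X}`. -/
def IsIdHom {A : BScheme} (ι : HomC A A) : Prop :=
  ι.TN = {diagRel A.X} ∧ ι.UN = {diagRel A.X} ∧
  ∀ x : A.X, ι.f (coset {diagRel A.X} x) = coset {diagRel A.X} x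

/-- A `τ_T`-scheme on the based set underlying `T`. -/
structure TauSchemeOn (T : BScheme) where
  rels : Set (Set (T.X × T.X))
  isScheme : IsScheme rels
  alpha : Set (T.X × T.X) → Set (T.X × T.X)
  alpha_bij : Set.BijOn alpha T.S rels
  alpha_one : alpha (diagRel T.X) = diagRel T.X
  alpha_star : ∀ p ∈ T.S, alpha (transp p) = transp (alpha p)
  alpha_const : ∀ p ∈ T.S, ∀ q ∈ T.S, ∀ r ∈ T.S,
    aC p q r = aC (alpha p) (alpha q) (alpha r)

/-- The based scheme underlying a `τ`-scheme. -/
abbrev TauSchemeOn.toB {T : BScheme} (Z : TauSchemeOn T) : BScheme :=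
  ⟨T.X, T.fin, T.base, Z.rels, Z.isScheme⟩

/-- An action `ζ` of a based scheme `U` on a based scheme `T`. -/
structure SchemeAction (U T : BScheme) where
  /-- the `τ`-scheme `ζ_y = (T_y, α^y)` for each `y ∈ Y` -/
  Z : U.X → TauSchemeOn T
  /-- the morphism `ζ_{y₁}^{y₂} ∈ Hom_𝒞(T_{y₁}, T_{y₂})` -/
  hom : ∀ y1 y2 : U.X, HomC (Z y1).toB (Z y2).toB
  /-- (1) `T_{y*} = T` -/
  base_rels : (Z U.base).rels = T.S
  /-- (1) `α^{y*} = id` -/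
  base_alpha : ∀ p, (Z U.base).alpha p = p
  /-- (2) `ζ_y^y` is the identity morphism -/
  hom_refl_TN : ∀ y : U.X, (hom y y).TN = {diagRel T.X}
  hom_refl_UN : ∀ y : U.X, (hom y y).UN = {diagRel T.X}
  hom_refl_f : ∀ (y : U.X) (x : T.X),
    (hom y y).f (coset {diagRel T.X} x) = coset {diagRel T.X} x
  /-- (3) `ζ_{y₂}^{y₁} = (ζ_{y₁}^{y₂})*` -/
  hom_symm_TN : ∀ y1 y2 : U.X, (hom y2 y1).TN = (hom y1 y2).UN
  hom_symm_UN : ∀ y1 y2 : U.X, (hom y2 y1).UN = (hom y1 y2).TN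
  hom_symm_f : ∀ y1 y2 : U.X,
    Set.InvOn (hom y2 y1).f (hom y1 y2).f
      (cosets (hom y1 y2).TN) (cosets (hom y1 y2).UN)
  /-- (4) `ζ_{y₁}^{y₂}(τ)` depends only on the element `u ∈ U` containing `(y₁,y₂)` -/
  zeta_welldef : ∀ u ∈ U.S, ∀ y1 y2 y1' y2' : U.X, (y1, y2) ∈ u → (y1', y2') ∈ u →
    ∀ Pp : Set (Set (T.X × T.X)),
      {u' | u' ∈ T.S ∧ ∃ t ∈ Pp,
        elemRel (hom y1 y2) ((Z y1).alpha t) ((Z y2).alpha u')} =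
      {u' | u' ∈ T.S ∧ ∃ t ∈ Pp,
        elemRel (hom y1' y2') ((Z y1').alpha t) ((Z y2').alpha u')}
  /-- (5) `ζ_{y₁}^{y₃} ≤ ζ_{y₁}^{y₂} ζ_{y₂}^{y₃}` -/
  le_comp : ∀ y1 y2 y3 : U.X,
    (hom y1 y3).TN ⊆ Tcomp (hom y1 y2) (hom y2 y3) ∧
    (hom y1 y3).UN ⊆ Vcomp (hom y1 y2) (hom y2 y3) ∧
    ∀ x x2 x3 : T.X,
      (hom y1 y2).f (coset (hom y1 y2).TN x) = coset (hom y1 y2).UN x2 →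
      (hom y2 y3).f (coset (hom y2 y3).TN x2) = coset (hom y2 y3).UN x3 →
      (hom y1 y3).f (coset (hom y1 y3).TN x) ⊆
        coset (Vcomp (hom y1 y2) (hom y2 y3)) x3

/-- The map `ζ_u` on subsets of `τ` induced by any `(y₁,y₂) ∈ u`. -/
def SchemeAction.zetaU {U T : BScheme} (act : SchemeAction U T)
    (u : Set (U.X × U.X)) (Pp : Set (Set (T.X × T.X))) : Set (Set (T.X × T.X)) :=
  {u' | ∃ y1 y2 : U.X, (y1, y2) ∈ u ∧ u' ∈ T.S ∧
    ∃ t ∈ Pp, elemRel (act.hom y1 y2) ((act.Z y1).alpha t) ((act.Z y2).alpha u')}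

/-- The relation `[u,t]` on `Y × X`. -/
def SchemeAction.rel {U T : BScheme} (act : SchemeAction U T)
    (u : Set (U.X × U.X)) (t : Set (T.X × T.X)) :
    Set ((U.X × T.X) × (U.X × T.X)) :=
  {w | (w.1.1, w.2.1) ∈ u ∧
    ((act.hom w.1.1 w.2.1).f (coset (act.hom w.1.1 w.2.1).TN w.1.2),
      coset (act.hom w.1.1 w.2.1).UN w.2.2) ∈
      quotRel (act.hom w.1.1 w.2.1).UN ((act.Z w.2.1).alpha t)}

/-- The semidirect product `U ⋉_ζ T` as a set of relations on `Y × X`. -/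
def SchemeAction.sdp {U T : BScheme} (act : SchemeAction U T) :
    Set (Set ((U.X × T.X) × (U.X × T.X))) :=
  {r | ∃ u ∈ U.S, ∃ t ∈ T.S, r = act.rel u t}

/-- The valency `n_s = a_{s s* 1}` of a relation. -/
noncomputable def nval {X : Type} (s : Set (X × X)) : ℕ :=
  aC s (transp s) (diagRel X)

/-! The `ui`-neighbourhood of `z₁ ∈ (y₁i)T̃` is cut into pieces `z₁(ui) ∩ (yi)T̃`; since `iπ` is
an isomorphism only the cosets with `y ∈ y₁u` occur. Condition (*), applied to transposes, shows
that every nonempty piece is a coset of `T̃''_u`, so all nonempty pieces have the same size.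
As `|z₁(ui)| = n_{ui} = |(y₁i)(ui)|` and no piece of `(y₁i)(ui)` is empty, no piece of `z₁(ui)`
is empty either. For the second claim, `t(ui) = {ui}` forces `t*(ui) = {ui}` by Condition (*),
and together they make `z₁` and any `z₁' ∈ z₁t` have the same `ui`-neighbourhood. -/

section Schemes

variable {X : Type} {S T : Set (Set (X × X))} {p q r s t : Set (X × X)} {a b c d x y z : X}

theorem mem_transp : (x, y) ∈ transp s ↔ (y, x) ∈ s := by
  rw [transp, Set.image_swap_eq_preimage_swap]; rfl

theorem transp_transp (s : Set (X × X)) : transp (transp s) = s := by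
  ext ⟨x, y⟩; rw [mem_transp, mem_transp]

theorem mem_coset_of_mem (ht : t ∈ T) (h : (x, y) ∈ t) : y ∈ coset T x :=
  ⟨t, ht, h⟩

theorem ncard_eq_sum_ncard_inter {α ι : Type*} [Finite α] {A : Set α} {I : Set ι}
    (hI : I.Finite) {C : ι → Set α} (hA : A ⊆ ⋃ i ∈ I, C i) (hC : I.PairwiseDisjoint C) :
    A.ncard = ∑ i ∈ hI.toFinset, (A ∩ C i).ncard :=
  calc A.ncard = (⋃ i ∈ I, A ∩ C i).ncard := by
        rw [← Set.inter_iUnion₂, Set.inter_eq_left.mpr hA]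
    _ = ∑ᶠ i ∈ I, (A ∩ C i).ncard :=
        hI.ncard_biUnion (fun _ _ => Set.toFinite _) (hC.mono fun _ => Set.inter_subset_right)
    _ = _ := finsum_mem_eq_finite_toFinset_sum _ hI

namespace IsScheme

theorem exists_mem (hS : IsScheme S) (w : X × X) : ∃ s ∈ S, w ∈ s := by
  obtain ⟨s, hs, -⟩ := hS.2.1 w
  exact ⟨s, hs⟩

theorem eq_of_mem (hS : IsScheme S) {s₁ s₂ : Set (X × X)} (h₁ : s₁ ∈ S) (h₂ : s₂ ∈ S)
    {w : X × X} (hw₁ : w ∈ s₁) (hw₂ : w ∈ s₂) : s₁ = s₂ := by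
  obtain ⟨s, -, hu⟩ := hS.2.1 w
  rw [hu s₁ ⟨h₁, hw₁⟩, hu s₂ ⟨h₂, hw₂⟩]

theorem transp_mem (hS : IsScheme S) (hs : s ∈ S) : transp s ∈ S :=
  hS.2.2.2.1 s hs

theorem card_eq_aC (hS : IsScheme S) (hp : p ∈ S) (hq : q ∈ S) (hr : r ∈ S) (hxy : (x, y) ∈ r) :
    Nat.card {z : X // (x, z) ∈ p ∧ (z, y) ∈ q} = aC p q r :=
  hS.2.2.2.2 p hp q hq r hr (x, y) hxy

theorem aC_pos [Finite X] (hS : IsScheme S) (hp : p ∈ S) (hq : q ∈ S) (hr : r ∈ S)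
    (hxy : (x, y) ∈ r) (hxz : (x, z) ∈ p) (hzy : (z, y) ∈ q) : 0 < aC p q r := by
  rw [← hS.card_eq_aC hp hq hr hxy]
  have : Nonempty {z : X // (x, z) ∈ p ∧ (z, y) ∈ q} := ⟨⟨z, hxz, hzy⟩⟩
  exact Nat.card_pos

theorem exists_of_aC_pos (hS : IsScheme S) (hp : p ∈ S) (hq : q ∈ S) (hr : r ∈ S)
    (h : 0 < aC p q r) (hxy : (x, y) ∈ r) : ∃ z, (x, z) ∈ p ∧ (z, y) ∈ q := by
  rw [← hS.card_eq_aC hp hq hr hxy] at h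
  obtain ⟨z, hz⟩ := (Nat.card_pos_iff.mp h).1
  exact ⟨z, hz⟩

theorem mem_cmulS [Finite X] (hS : IsScheme S) (hp : p ∈ S) (hq : q ∈ S) (hr : r ∈ S)
    (hxy : (x, y) ∈ r) (hxz : (x, z) ∈ p) (hzy : (z, y) ∈ q) : r ∈ cmulS S p q :=
  ⟨hr, hS.aC_pos hp hq hr hxy hxz hzy⟩

theorem mem_of_cmulS_eq_singleton [Finite X] (hS : IsScheme S) (hp : p ∈ S) (hq : q ∈ S)
    (h : cmulS S p q = {s}) (hxz : (x, z) ∈ p) (hzy : (z, y) ∈ q) : (x, y) ∈ s := by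
  obtain ⟨r, hr, hxy⟩ := hS.exists_mem (x, y)
  have hrs : r ∈ cmulS S p q := hS.mem_cmulS hp hq hr hxy hxz hzy
  rw [h, Set.mem_singleton_iff] at hrs
  rwa [← hrs]

theorem transp_mem_cmulS [Finite X] (hS : IsScheme S) (hp : p ∈ S) (hq : q ∈ S)
    (h : r ∈ cmulS S p q) : transp r ∈ cmulS S (transp q) (transp p) := by
  obtain ⟨hr, hpos⟩ := h
  obtain ⟨⟨x, y⟩, hxy⟩ := hS.1 r hr
  obtain ⟨z, hxz, hzy⟩ := hS.exists_of_aC_pos hp hq hr hpos hxy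
  exact hS.mem_cmulS (hS.transp_mem hq) (hS.transp_mem hp) (hS.transp_mem hr)
    (mem_transp.mpr hxy) (mem_transp.mpr hzy) (mem_transp.mpr hxz)

theorem subsingleton_cmulS_of_transp [Finite X] (hS : IsScheme S) (hp : p ∈ S) (hq : q ∈ S)
    (h : (cmulS S (transp q) (transp p)).Subsingleton) : (cmulS S p q).Subsingleton :=
  fun r₁ h₁ r₂ h₂ => by
    simpa only [transp_transp] using
      congrArg transp (h (hS.transp_mem_cmulS hp hq h₁) (hS.transp_mem_cmulS hp hq h₂))

theorem mem_cmulS_transp_left [Finite X] (hS : IsScheme S) (hp : p ∈ S) (h : r ∈ cmulS S p r) :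
    r ∈ cmulS S (transp p) r := by
  obtain ⟨hr, hpos⟩ := h
  obtain ⟨⟨x, y⟩, hxy⟩ := hS.1 r hr
  obtain ⟨z, hxz, hzy⟩ := hS.exists_of_aC_pos hp hr hr hpos hxy
  exact hS.mem_cmulS (hS.transp_mem hp) hr hr hzy (mem_transp.mpr hxz) hxy

theorem pimg_eq_of_cmulS_eq_singleton [Finite X] (hS : IsScheme S) (ht : t ∈ S) (hs : s ∈ S)
    (h : cmulS S t s = {s}) (h' : (cmulS S (transp t) s).Subsingleton) (hab : (a, b) ∈ t) :
    pimg s b = pimg s a := by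
  have h'' : cmulS S (transp t) s = {s} :=
    h'.eq_singleton_of_mem (hS.mem_cmulS_transp_left ht (h ▸ Set.mem_singleton s))
  ext w
  exact ⟨hS.mem_of_cmulS_eq_singleton ht hs h hab,
    hS.mem_of_cmulS_eq_singleton (hS.transp_mem ht) hs h'' (mem_transp.mpr hab)⟩

theorem ncard_pimg (hS : IsScheme S) (ht : t ∈ S) (a : X) : (pimg t a).ncard = nval t := by
  rw [← Nat.card_coe_set_eq, nval,
    ← hS.card_eq_aC ht (hS.transp_mem ht) hS.2.2.1 (show (a, a) ∈ diagRel X from rfl)]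
  exact Nat.card_congr (Equiv.subtypeEquivRight fun z =>
    ⟨fun hz => ⟨hz, mem_transp.mpr hz⟩, And.left⟩)

theorem ncard_coset [Finite X] (hS : IsScheme S) (hT : T ⊆ S) (a : X) :
    (coset T a).ncard = ∑ t ∈ (Set.toFinite T).toFinset, nval t := by
  rw [ncard_eq_sum_ncard_inter (Set.toFinite T) (C := fun t => pimg t a)
    (fun _ hw => by obtain ⟨t, ht, hw⟩ := hw; exact Set.mem_biUnion ht hw)
    (fun t₁ h₁ t₂ h₂ hne => Set.disjoint_left.mpr fun _ hw₁ hw₂ =>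
      hne (hS.eq_of_mem (hT h₁) (hT h₂) hw₁ hw₂))]
  refine Finset.sum_congr rfl fun t ht => ?_
  rw [Set.Finite.mem_toFinset] at ht
  have hpimg : pimg t a ⊆ coset T a := fun _ => mem_coset_of_mem ht
  rw [Set.inter_eq_right.mpr hpimg, hS.ncard_pimg (hT ht)]

theorem mem_quotRel_of_mem [Finite X] (hS : IsScheme S) (hT : T ⊆ S) (hs : s ∈ S) (hr : r ∈ S)
    (hab : (a, b) ∈ s) (hcd : (c, d) ∈ s) (h : (coset T a, coset T b) ∈ quotRel T r) :
    (coset T c, coset T d) ∈ quotRel T r := by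
  obtain ⟨x₁, x₂, hx, ⟨e, f⟩, hef, he, hf⟩ := h
  obtain ⟨h₁, h₂⟩ := Prod.mk.inj hx
  obtain ⟨t₁, ht₁, hae⟩ := h₁ ▸ he
  obtain ⟨t₂, ht₂, hbf⟩ := h₂ ▸ hf
  obtain ⟨m, hm, haf⟩ := hS.exists_mem (a, f)
  have ht₂' := hS.transp_mem (hT ht₂)
  obtain ⟨f', hcf', hf'd⟩ := hS.exists_of_aC_pos hm ht₂' hs
    (hS.aC_pos hm ht₂' hs hab haf (mem_transp.mpr hbf)) hcd
  obtain ⟨e', hce', he'f'⟩ := hS.exists_of_aC_pos (hT ht₁) hr hm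
    (hS.aC_pos (hT ht₁) hr hm haf hae hef) hcf'
  exact ⟨c, d, rfl, (e', f'), he'f', ⟨t₁, ht₁, hce'⟩, ⟨t₂, ht₂, mem_transp.mp hf'd⟩⟩

end IsScheme

namespace IsClosedIn

variable [Finite X]

theorem diagRel_mem (hT : IsClosedIn S T) (hS : IsScheme S) (hne : T.Nonempty) :
    diagRel X ∈ T := by
  obtain ⟨t, ht⟩ := hne
  obtain ⟨⟨x, y⟩, hxy⟩ := hS.1 t (hT.1 ht)
  exact hT.2 t ht t ht (hS.mem_cmulS (hS.transp_mem (hT.1 ht)) (hT.1 ht)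
    hS.2.2.1 (show (y, y) ∈ diagRel X from rfl) (mem_transp.mpr hxy) hxy)

theorem transp_mem (hT : IsClosedIn S T) (hS : IsScheme S) (ht : t ∈ T) : transp t ∈ T := by
  obtain ⟨⟨x, y⟩, hxy⟩ := hS.1 t (hT.1 ht)
  exact hT.2 t ht (diagRel X) (hT.diagRel_mem hS ⟨t, ht⟩)
    (hS.mem_cmulS (hS.transp_mem (hT.1 ht)) hS.2.2.1 (hS.transp_mem (hT.1 ht))
      (mem_transp.mpr hxy) (mem_transp.mpr hxy) rfl)

theorem cmulS_subset (hT : IsClosedIn S T) (hS : IsScheme S) {t₁ t₂ : Set (X × X)}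
    (h₁ : t₁ ∈ T) (h₂ : t₂ ∈ T) : cmulS S t₁ t₂ ⊆ T := by
  simpa only [transp_transp] using hT.2 (transp t₁) (hT.transp_mem hS h₁) t₂ h₂

theorem mem_coset_comm (hT : IsClosedIn S T) (hS : IsScheme S) (h : b ∈ coset T a) :
    a ∈ coset T b := by
  obtain ⟨t, ht, hab⟩ := h
  exact ⟨transp t, hT.transp_mem hS ht, mem_transp.mpr hab⟩

theorem mem_coset_trans (hT : IsClosedIn S T) (hS : IsScheme S) (hab : b ∈ coset T a)
    (hbc : c ∈ coset T b) : c ∈ coset T a := by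
  obtain ⟨t₁, ht₁, h₁⟩ := hab
  obtain ⟨t₂, ht₂, h₂⟩ := hbc
  obtain ⟨e, he, hac⟩ := hS.exists_mem (a, c)
  exact ⟨e, hT.cmulS_subset hS ht₁ ht₂ (hS.mem_cmulS (hT.1 ht₁) (hT.1 ht₂) he hac h₁ h₂), hac⟩

theorem coset_eq_of_mem (hT : IsClosedIn S T) (hS : IsScheme S) (h : b ∈ coset T a) :
    coset T b = coset T a :=
  Set.ext fun _ => ⟨hT.mem_coset_trans hS h, hT.mem_coset_trans hS (hT.mem_coset_comm hS h)⟩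

theorem pairwiseDisjoint_coset (hT : IsClosedIn S T) (hS : IsScheme S) {ι : Type*} {I : Set ι}
    {c : ι → X} (hc : I.InjOn fun j => coset T (c j)) :
    I.PairwiseDisjoint fun j => coset T (c j) :=
  fun _ h₁ _ h₂ hne => Set.disjoint_left.mpr fun _ hw₁ hw₂ => hne <| hc h₁ h₂ <|
    (hT.coset_eq_of_mem hS hw₁).symm.trans (hT.coset_eq_of_mem hS hw₂)

end IsClosedIn

/-- The paper's `T̃''_u` for `s = ui`. -/
def stabRight (S T : Set (Set (X × X))) (s : Set (X × X)) : Set (Set (X × X)) :=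
  {t | t ∈ T ∧ cmulS S s t = {s}}

variable [Finite X]

theorem pimg_inter_coset_eq_coset_stabRight (hS : IsScheme S) (hT : IsClosedIn S T) (hs : s ∈ S)
    (hsub : ∀ e ∈ T, (cmulS S s e).Subsingleton) (hxz : (x, z) ∈ s) (hz : z ∈ coset T c) :
    pimg s x ∩ coset T c = coset (stabRight S T s) z := by
  ext v
  constructor
  · rintro ⟨hxv, hv⟩
    obtain ⟨e, he, hzv⟩ := hT.mem_coset_trans hS (hT.mem_coset_comm hS hz) hv
    exact ⟨e, ⟨he, (hsub e he).eq_singleton_of_mem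
      (hS.mem_cmulS hs (hT.1 he) hs hxv hxz hzv)⟩, hzv⟩
  · rintro ⟨e, ⟨he, hse⟩, hzv⟩
    exact ⟨hS.mem_of_cmulS_eq_singleton hs (hT.1 he) hse hxz hzv,
      hT.mem_coset_trans hS hz ⟨e, he, hzv⟩⟩

theorem ncard_pimg_inter_coset (hS : IsScheme S) (hT : IsClosedIn S T) (hs : s ∈ S)
    (hsub : ∀ e ∈ T, (cmulS S s e).Subsingleton) (h : (pimg s x ∩ coset T c).Nonempty) :
    (pimg s x ∩ coset T c).ncard = ∑ t ∈ (Set.toFinite (stabRight S T s)).toFinset, nval t := by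
  obtain ⟨z, hxz, hz⟩ := h
  rw [pimg_inter_coset_eq_coset_stabRight hS hT hs hsub hxz hz,
    hS.ncard_coset fun t ht => hT.1 ht.1]

theorem nonempty_pimg_inter_coset (hS : IsScheme S) (hT : IsClosedIn S T) (hs : s ∈ S)
    (hsub : ∀ e ∈ T, (cmulS S s e).Subsingleton) {ι : Type*} {I : Set ι} (hI : I.Finite)
    {c : ι → X} (hc : I.PairwiseDisjoint fun j => coset T (c j))
    (ha : pimg s a ⊆ ⋃ j ∈ I, coset T (c j)) (hx : pimg s x ⊆ ⋃ j ∈ I, coset T (c j))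
    (hmeet : ∀ j ∈ I, (pimg s a ∩ coset T (c j)).Nonempty) {j : ι} (hj : j ∈ I) :
    (pimg s x ∩ coset T (c j)).Nonempty := by
  classical
  set K := ∑ t ∈ (Set.toFinite (stabRight S T s)).toFinset, nval t
  have hcount : ∀ y, pimg s y ⊆ ⋃ j ∈ I, coset T (c j) →
      nval s = K * (hI.toFinset.filter fun j => (pimg s y ∩ coset T (c j)).Nonempty).card := by
    intro y hy
    have hpiece : ∀ j, (pimg s y ∩ coset T (c j)).ncard =
        if (pimg s y ∩ coset T (c j)).Nonempty then K else 0 := by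
      intro j
      split_ifs with hne
      · exact ncard_pimg_inter_coset hS hT hs hsub hne
      · rw [Set.not_nonempty_iff_eq_empty.mp hne, Set.ncard_empty]
    rw [← hS.ncard_pimg hs y, ncard_eq_sum_ncard_inter hI hy hc]
    simp only [hpiece, Finset.sum_ite, Finset.sum_const, smul_eq_mul,
      zero_mul, add_zero, mul_comm]
  have hK : 0 < K := by
    have hKj : (pimg s a ∩ coset T (c j)).ncard = K :=
      ncard_pimg_inter_coset hS hT hs hsub (hmeet j hj)
    rw [← hKj]
    exact (Set.ncard_pos (Set.toFinite _)).mpr (hmeet j hj)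
  have hfull := Finset.card_filter_eq_iff.mpr fun j hj => hmeet j (hI.mem_toFinset.mp hj)
  have hcard := (hcount x hx).symm.trans (hcount a ha)
  rw [hfull] at hcard
  exact Finset.card_filter_eq_iff.mp (Nat.eq_of_mul_eq_mul_left hK hcard) j (hI.mem_toFinset.mpr hj)

end Schemes

theorem pimg_subset_biUnion_coset {Y Z : Type} [Finite Z] {SU : Set (Set (Y × Y))}
    {S T : Set (Set (Z × Z))} (hU : IsScheme SU) (hS : IsScheme S) (hT : IsClosedIn S T)
    {i : Y → Z} {y₀ : Y} {z₀ : Z}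
    (hi : IsIsoOn (fullPres SU y₀) (quotPres S T z₀) fun y => coset T (i y))
    (himor : ∀ u ∈ SU, ∃ s ∈ S, elemMapsTo i u s) {u : Set (Y × Y)} {s : Set (Z × Z)}
    (hu : u ∈ SU) (hs : s ∈ S) (hus : elemMapsTo i u s) {y₁ : Y} {x : Z}
    (hx : x ∈ coset T (i y₁)) : pimg s x ⊆ ⋃ y ∈ pimg u y₁, coset T (i y) := by
  intro w hxw
  have hdiag : diagRel Z ∈ T := by
    obtain ⟨t, ht, -⟩ := hx
    exact hT.diagRel_mem hS ⟨t, ht⟩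
  have hself : ∀ z, z ∈ coset T z := fun z => ⟨diagRel Z, hdiag, rfl⟩
  obtain ⟨y₃, -, hy₃⟩ := hi.2.1.2.2 (show coset T w ∈ cosets T from ⟨w, rfl⟩)
  have hw : w ∈ coset T (i y₃) := by
    rw [show coset T (i y₃) = coset T w from hy₃]; exact hself w
  obtain ⟨u₃, hu₃, hy₁₃⟩ := hU.exists_mem (y₁, y₃)
  obtain ⟨s₃, hs₃, hus₃⟩ := himor u₃ hu₃
  have hmaps : elemMapsTo (fun y => coset T (i y)) u (quotRel T s) :=
    fun p hp => ⟨i p.1, i p.2, rfl, (i p.1, i p.2), hus p hp, hself _, hself _⟩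
  have hmaps₃ : elemMapsTo (fun y => coset T (i y)) u₃ (quotRel T s) :=
    fun p hp => hS.mem_quotRel_of_mem hT.1 hs₃ hs (hus₃ _ hy₁₃) (hus₃ p hp)
      ⟨i y₁, i y₃, rfl, (x, w), hxw, hx, hw⟩
  obtain ⟨v, -, hv⟩ := hi.2.2 (quotRel T s) ⟨s, hs, rfl⟩
  have hu₃u : u₃ = u := (hv u₃ ⟨hu₃, hmaps₃⟩).trans (hv u ⟨hu, hmaps⟩).symm
  exact Set.mem_biUnion (show y₃ ∈ pimg u y₁ from hu₃u ▸ hy₁₃) hw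

theorem stmt14_general
    (U Sch : BScheme) (Tt : Set (Set (Sch.X × Sch.X)))
    (hTt : IsClosedIn Sch.S Tt)
    (i : U.X → Sch.X)
    (hipi : IsBasedIsoOn (fullPres U.S U.base) (quotPres Sch.S Tt Sch.base)
      (fun y => coset Tt (i y)))
    (iS : Set (U.X × U.X) → Set (Sch.X × Sch.X))
    (hiS : ∀ u ∈ U.S, iS u ∈ Sch.S ∧ elemMapsTo i u (iS u))
    (hcond : ∀ u ∈ U.S, ∀ t ∈ Tt, ∃! s, s ∈ cmulS Sch.S t (iS u))
    (u : Set (U.X × U.X)) (hu : u ∈ U.S) (y1 y2 : U.X) (hy : (y1, y2) ∈ u)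
    (z1 : Sch.X) (hz1 : z1 ∈ coset Tt (i y1)) :
    (∃ z2 ∈ coset Tt (i y2),
      pimg (iS u) z1 ∩ coset Tt (i y2) =
        coset {t | t ∈ Tt ∧ cmulS Sch.S (iS u) t = {iS u}} z2) ∧
    ∀ z1' ∈ coset {t | t ∈ Tt ∧ cmulS Sch.S t (iS u) = {iS u}} z1,
      pimg (iS u) z1' ∩ coset Tt (i y2) =
        pimg (iS u) z1 ∩ coset Tt (i y2) := by
  have : Fintype Sch.X := Sch.fin
  have : Fintype U.X := U.fin
  have hSS := Sch.isScheme
  obtain ⟨hus, hmaps⟩ := hiS u hu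
  have hu' := U.isScheme.transp_mem hu
  have htransp : iS (transp u) = transp (iS u) :=
    hSS.eq_of_mem (hiS _ hu').1 (hSS.transp_mem hus)
      ((hiS _ hu').2 (y2, y1) (mem_transp.mpr hy)) (mem_transp.mpr (hmaps _ hy))
  have hsub : ∀ e ∈ Tt, (cmulS Sch.S (iS u) e).Subsingleton := fun e he =>
    hSS.subsingleton_cmulS_of_transp hus (hTt.1 he) fun _ h₁ _ h₂ =>
      (hcond _ hu' _ (hTt.transp_mem hSS he)).unique (htransp ▸ h₁) (htransp ▸ h₂)
  have hcover : ∀ x ∈ coset Tt (i y1), pimg (iS u) x ⊆ ⋃ y ∈ pimg u y1, coset Tt (i y) :=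
    fun x hx => pimg_subset_biUnion_coset U.isScheme hSS hTt hipi.1
      (fun u' hu' => ⟨iS u', hiS u' hu'⟩) hu hus hmaps hx
  have hdiag : diagRel Sch.X ∈ Tt :=
    hTt.diagRel_mem hSS (by obtain ⟨t, ht, -⟩ := hz1; exact ⟨t, ht⟩)
  have hself : ∀ z, z ∈ coset Tt z := fun z => ⟨diagRel _, hdiag, rfl⟩
  obtain ⟨z2, hz1z2, hz2⟩ := nonempty_pimg_inter_coset hSS hTt hus hsub (Set.toFinite _)
    (hTt.pairwiseDisjoint_coset hSS (hipi.1.2.1.injOn.mono (Set.subset_univ _)))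
    (hcover _ (hself _)) (hcover z1 hz1) (fun y hy => ⟨i y, hmaps _ hy, hself _⟩) hy
  refine ⟨⟨z2, hz2, pimg_inter_coset_eq_coset_stabRight hSS hTt hus hsub hz1z2 hz2⟩, ?_⟩
  rintro z1' ⟨t, ⟨ht, hts⟩, hz1t⟩
  rw [hSS.pimg_eq_of_cmulS_eq_singleton (hTt.1 ht) hus hts
    (fun _ h₁ _ h₂ => (hcond u hu _ (hTt.transp_mem hSS ht)).unique h₁ h₂) hz1t]

theorem stmt14
    (T U Sch : BScheme) (Tt : Set (Set (Sch.X × Sch.X)))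
    (hTt : IsClosedIn Sch.S Tt)
    (hsub : ∃ g : Sch.X → T.X,
      IsBasedIsoOn (subPres Tt Sch.base) (fullPres T.S T.base) g)
    (i : U.X → Sch.X)
    (himor : IsMorOn (fullPres U.S U.base) (fullPres Sch.S Sch.base) i)
    (hibase : i U.base = Sch.base)
    (hipi : IsBasedIsoOn (fullPres U.S U.base) (quotPres Sch.S Tt Sch.base)
      (fun y => coset Tt (i y)))
    (iS : Set (U.X × U.X) → Set (Sch.X × Sch.X))
    (hiS : ∀ u ∈ U.S, iS u ∈ Sch.S ∧ elemMapsTo i u (iS u))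
    (hcond : ∀ u ∈ U.S, ∀ t ∈ Tt, ∃! s, s ∈ cmulS Sch.S t (iS u))
    (u : Set (U.X × U.X)) (hu : u ∈ U.S) (y1 y2 : U.X) (hy : (y1, y2) ∈ u)
    (z1 : Sch.X) (hz1 : z1 ∈ coset Tt (i y1)) :
    (∃ z2 ∈ coset Tt (i y2),
      pimg (iS u) z1 ∩ coset Tt (i y2) =
        coset {t | t ∈ Tt ∧ cmulS Sch.S (iS u) t = {iS u}} z2) ∧
    ∀ z1' ∈ coset {t | t ∈ Tt ∧ cmulS Sch.S t (iS u) = {iS u}} z1,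
      pimg (iS u) z1' ∩ coset Tt (i y2) =
        pimg (iS u) z1 ∩ coset Tt (i y2) :=
  stmt14_general U Sch Tt hTt i hipi iS hiS hcond u hu y1 y2 hy z1 hz1
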